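/- arXiv:1712.01255 — 2 statements merged into one kernel-verified Lean document; each statement's English description precedes it below -/
import Mathlib

section
/- Fix constants 0 < α < b, j ∈ N, δ, η > 0 and k ∈ N. There is a constant C₀ depending only on α and b such that for all sufficiently large n the following holds for every function PT as in the hypotheses: for every ℓ with n/2^j ≤ ℓ and kℓ ≤ n, every point z ∈ Box(n) that is (δ, S¹(η), ℓ, k)-Stable, every unit direction θ, and all ℓ', ℓ'' with (k/4)·ℓ ≤ ℓ', ℓ'' ≤ kℓ, one has grad(z,θ,ℓ') ≤ (1 + C₀(η + δ + 1/k))·grad(z,θ,ℓ''). -/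
noncomputable section

/-- Euclidean norm on `ℝ²`. -/
def norm2 (p : ℝ × ℝ) : ℝ := Real.sqrt (p.1 ^ 2 + p.2 ^ 2)

/-- The box `[-r, r]² ⊆ ℝ²`. -/
def Box (r : ℝ) : Set (ℝ × ℝ) := {p | |p.1| ≤ r ∧ |p.2| ≤ r}

/-- The lattice box `[-r, r]² ∩ ℤ²`. -/
def LBox (r : ℝ) : Set (ℤ × ℤ) := {z | |(z.1 : ℝ)| ≤ r ∧ |(z.2 : ℝ)| ≤ r}

/-- The unit vector at angle `a`. -/
def dir (a : ℝ) : ℝ × ℝ := (Real.cos a, Real.sin a)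

/-- `z` is `(δ, θ, ℓ, k)`-stable for the distance function `D`: for every integer
`1 ≤ k' ≤ k`, `k'·D(z, z+ℓθ)/(1+δ) ≤ D(z, z+k'ℓθ) ≤ (1+δ)·k'·D(z, z+ℓθ)`. -/
def StablePt (D : ℝ × ℝ → ℝ × ℝ → ℝ) (δ : ℝ) (θ : ℝ × ℝ) (ℓ : ℝ) (k : ℝ)
    (z : ℝ × ℝ) : Prop :=
  ∀ k' : ℕ, 1 ≤ k' → (k' : ℝ) ≤ k →
    (k' : ℝ) * D z (z + ℓ • θ) / (1 + δ) ≤ D z (z + ((k' : ℝ) * ℓ) • θ) ∧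
      D z (z + ((k' : ℝ) * ℓ) • θ) ≤ (1 + δ) * (k' : ℝ) * D z (z + ℓ • θ)

/-- `z` is `(δ, S¹(η), ℓ, k)`-stable: it is `(δ, θ, ℓ, k)`-stable for every direction
`θ` in the discretized circle `S¹(η) = {0, η, 2η, …, 2π − η}`. -/
def StableDirs (D : ℝ × ℝ → ℝ × ℝ → ℝ) (δ η ℓ k : ℝ) (z : ℝ × ℝ) : Prop :=
  ∀ i : ℕ, (i : ℝ) * η ≤ 2 * Real.pi - η → StablePt D δ (dir ((i : ℝ) * η)) ℓ k z

/-- The gradient function `grad(z, θ, ℓ) = D(z, z + ℓθ)/ℓ`. -/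
def grad (D : ℝ × ℝ → ℝ × ℝ → ℝ) (z : ℝ × ℝ) (θ : ℝ × ℝ) (ℓ : ℝ) : ℝ :=
  D z (z + ℓ • θ) / ℓ

/-- `D : ℝ² × ℝ² → [0,∞)` satisfies the triangle inequality, `D(x,y) ≤ 3b|x−y| + 2b`
everywhere, and `α|x−y| ≤ D(x,y)` for `x, y ∈ Box(R)` with `|x−y| ≥ rt`. -/
def GoodPT (α b R rt : ℝ) (D : ℝ × ℝ → ℝ × ℝ → ℝ) : Prop :=
  (∀ x y, 0 ≤ D x y) ∧
  (∀ x y z, D x z ≤ D x y + D y z) ∧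
  (∀ x y, D x y ≤ 3 * b * norm2 (x - y) + 2 * b) ∧
  (∀ x y, x ∈ Box R → y ∈ Box R → rt ≤ norm2 (x - y) → α * norm2 (x - y) ≤ D x y)

/-!
Pick a direction `u` of the net `S¹(η)` with `|u - θ| ≤ η`. Stability along `u` gives
`D(z, z + mℓu) ≈ m · D(z, z + ℓu)` up to the factor `1 + δ` for `m ≤ k`; rounding `ℓ'` up and `ℓ''`
down to multiples `mℓ` and switching from `u` to `θ` moves the endpoint by at most `ℓ + η ℓ'`,
which costs `O(b (ℓ + η ℓ'))` by the coarse upper bound on `D`. As `ℓ', ℓ'' ≥ kℓ/4`, both gradients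
are within `O(b (η + 1/k))` of `(1 ± δ) grad(z, u, ℓ)`, and the a priori lower bound `grad ≥ α`
(valid since `ℓ ≥ n/2^j ≥ 4√n` for large `n`) turns this additive error into a multiplicative one.
When `η + δ + 1/k > 1/4` the a priori bounds `α ≤ grad ≤ 4b` already suffice.
-/

open Real

lemma norm2_eq_norm (p : ℝ × ℝ) : norm2 p = ‖Complex.equivRealProdCLM.symm p‖ := by
  simp [norm2, Complex.norm_def, Complex.normSq_apply, sq]

lemma norm2_smul (c : ℝ) (p : ℝ × ℝ) : norm2 (c • p) = |c| * norm2 p := by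
  simp only [norm2_eq_norm, map_smul, norm_smul, Real.norm_eq_abs]

lemma norm2_sub_comm (p q : ℝ × ℝ) : norm2 (p - q) = norm2 (q - p) := by
  simp only [norm2_eq_norm, map_sub, norm_sub_rev]

lemma abs_fst_le_norm2 (p : ℝ × ℝ) : |p.1| ≤ norm2 p := by
  simpa [norm2_eq_norm] using Complex.abs_re_le_norm (Complex.equivRealProdCLM.symm p)

lemma abs_snd_le_norm2 (p : ℝ × ℝ) : |p.2| ≤ norm2 p := by
  simpa [norm2_eq_norm] using Complex.abs_im_le_norm (Complex.equivRealProdCLM.symm p)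

lemma norm2_add_smul_sub_add_smul_le (z u v : ℝ × ℝ) (s t : ℝ) :
    norm2 ((z + s • u) - (z + t • v)) ≤ |s - t| * norm2 u + |t| * norm2 (u - v) := by
  rw [show (z + s • u) - (z + t • v) = (s - t) • u + t • (u - v) by module,
    ← norm2_smul, ← norm2_smul]
  simp only [norm2_eq_norm, map_add]
  exact norm_add_le _ _

lemma equivRealProdCLM_symm_dir (a : ℝ) :
    Complex.equivRealProdCLM.symm (dir a) = Complex.exp (Complex.I * a) := by
  rw [mul_comm, Complex.exp_mul_I]
  apply Complex.ext <;> simp [dir, ← Complex.ofReal_cos, ← Complex.ofReal_sin]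

lemma norm2_dir (a : ℝ) : norm2 (dir a) = 1 := by
  rw [norm2_eq_norm, equivRealProdCLM_symm_dir, Complex.norm_exp_I_mul_ofReal]

lemma norm2_dir_sub_dir_le (s t : ℝ) : norm2 (dir s - dir t) ≤ |s - t| := by
  have h : Complex.exp (Complex.I * s) - Complex.exp (Complex.I * t)
      = Complex.exp (Complex.I * t) * (Complex.exp (Complex.I * ↑(s - t)) - 1) := by
    rw [mul_sub, ← Complex.exp_add]; push_cast; ring_nf
  rw [norm2_eq_norm, map_sub, equivRealProdCLM_symm_dir, equivRealProdCLM_symm_dir, h,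
    norm_mul, Complex.norm_exp_I_mul_ofReal, one_mul]
  exact Real.norm_exp_I_mul_ofReal_sub_one_le

lemma dir_add_two_pi (a : ℝ) : dir (a + 2 * π) = dir a := by
  simp [dir]

lemma exists_dir_eq_of_norm2_eq_one {θ : ℝ × ℝ} (hθ : norm2 θ = 1) :
    ∃ a, 0 ≤ a ∧ a < 2 * π ∧ dir a = θ := by
  obtain ⟨w, rfl⟩ := Complex.equivRealProdCLM.surjective θ
  have hw : ‖w‖ = 1 := by
    rwa [norm2_eq_norm, ContinuousLinearEquiv.symm_apply_apply] at hθ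
  have hdir : dir (Complex.arg w) = Complex.equivRealProdCLM w := by
    apply Complex.equivRealProdCLM.symm.injective
    rw [equivRealProdCLM_symm_dir, ContinuousLinearEquiv.symm_apply_apply]
    conv_rhs => rw [← Complex.norm_mul_exp_arg_mul_I w, hw]
    rw [Complex.ofReal_one, one_mul, mul_comm]
  rcases le_or_gt 0 (Complex.arg w) with h0 | h0
  · exact ⟨_, h0, (Complex.arg_le_pi w).trans_lt (by linarith [pi_pos]), hdir⟩
  · exact ⟨_, by linarith [Complex.neg_pi_lt_arg w], by linarith, (dir_add_two_pi _).trans hdir⟩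

lemma exists_nat_mul_dir_near {θ : ℝ × ℝ} (hθ : norm2 θ = 1) {η : ℝ} (hη : 0 < η)
    (hη2π : η ≤ 2 * π) :
    ∃ i : ℕ, (i : ℝ) * η ≤ 2 * π - η ∧ norm2 (dir (i * η) - θ) ≤ η := by
  obtain ⟨a, ha0, ha2π, rfl⟩ := exists_dir_eq_of_norm2_eq_one hθ
  rcases le_or_gt a (2 * π - η) with ha | ha
  · have hfl := (le_div_iff₀ hη).mp (Nat.floor_le (div_nonneg ha0 hη.le))
    have hlt := (div_lt_iff₀ hη).mp (Nat.lt_floor_add_one (a / η))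
    refine ⟨⌊a / η⌋₊, hfl.trans ha, (norm2_dir_sub_dir_le _ _).trans ?_⟩
    rw [abs_sub_le_iff]
    constructor <;> linarith
  · refine ⟨0, by simpa using hη2π, ?_⟩
    rw [Nat.cast_zero, zero_mul, ← dir_add_two_pi 0, zero_add]
    refine (norm2_dir_sub_dir_le _ _).trans ?_
    rw [abs_sub_le_iff]
    constructor <;> linarith

lemma norm2_sub_add_smul {z u : ℝ × ℝ} (hu : norm2 u = 1) {s : ℝ} (hs : 0 ≤ s) :
    norm2 (z - (z + s • u)) = s := by
  rw [show z - (z + s • u) = (-s) • u by module, norm2_smul, hu, abs_neg, abs_of_nonneg hs,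
    mul_one]

lemma norm2_add_smul_sub_add_smul_le_of_near {z u v : ℝ × ℝ} {s t ℓ η : ℝ} (hu : norm2 u = 1)
    (huv : norm2 (u - v) ≤ η) (ht : 0 ≤ t) (hst : |s - t| ≤ ℓ) :
    norm2 ((z + s • u) - (z + t • v)) ≤ ℓ + η * t := by
  refine (norm2_add_smul_sub_add_smul_le z u v s t).trans ?_
  rw [hu, mul_one, abs_of_nonneg ht, mul_comm η]
  gcongr

lemma box_mono {r R : ℝ} (h : r ≤ R) : Box r ⊆ Box R :=
  fun _ hp => ⟨hp.1.trans h, hp.2.trans h⟩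

lemma add_smul_mem_box {r s : ℝ} {z u : ℝ × ℝ} (hz : z ∈ Box r) (hu : norm2 u = 1)
    (hs : 0 ≤ s) : z + s • u ∈ Box (r + s) := by
  have key : ∀ x y : ℝ, |x| ≤ r → |y| ≤ 1 → |x + s * y| ≤ r + s := fun x y hx hy =>
    (abs_add_le _ _).trans (by rw [abs_mul, abs_of_nonneg hs]; nlinarith [abs_nonneg y])
  exact ⟨key _ _ hz.1 (hu ▸ abs_fst_le_norm2 u), key _ _ hz.2 (hu ▸ abs_snd_le_norm2 u)⟩

lemma GoodPT.le_grad {α b R rt r s : ℝ} {D : ℝ × ℝ → ℝ × ℝ → ℝ} {z u : ℝ × ℝ}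
    (hD : GoodPT α b R rt D) (hz : z ∈ Box r) (hu : norm2 u = 1) (hs : 0 < s) (hrt : rt ≤ s)
    (hsR : r + s ≤ R) : α ≤ grad D z u s := by
  have hdist := norm2_sub_add_smul (z := z) hu hs.le
  have h := hD.2.2.2 _ _ (box_mono (by linarith) hz) (box_mono hsR (add_smul_mem_box hz hu hs.le))
    (hdist.symm ▸ hrt)
  rw [hdist] at h
  rwa [grad, le_div_iff₀ hs]

lemma coarse_error_le {b η ℓ s ε : ℝ} (hb : 0 ≤ b) (hℓ : 2 ≤ ℓ) (hs : 0 < s) (hℓs : ℓ ≤ 4 * ε * s)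
    (hηε : η ≤ ε) : 3 * b * (ℓ + η * s) + 2 * b ≤ 19 * b * ε * s := by
  nlinarith [mul_le_mul_of_nonneg_left hℓs hb, mul_le_mul_of_nonneg_left hηε (mul_nonneg hb hs.le)]

structure CoarsePT (b : ℝ) (D : ℝ × ℝ → ℝ × ℝ → ℝ) : Prop where
  nonneg : ∀ x y, 0 ≤ D x y
  triangle : ∀ x y z, D x z ≤ D x y + D y z
  le_coarse : ∀ x y, D x y ≤ 3 * b * norm2 (x - y) + 2 * b

lemma GoodPT.coarsePT {α b R rt : ℝ} {D : ℝ × ℝ → ℝ × ℝ → ℝ} (hD : GoodPT α b R rt D) :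
    CoarsePT b D :=
  ⟨hD.1, hD.2.1, hD.2.2.1⟩

namespace CoarsePT

variable {b δ η ℓ s : ℝ} {D : ℝ × ℝ → ℝ × ℝ → ℝ} {z u θ : ℝ × ℝ}

lemma b_nonneg (hD : CoarsePT b D) : 0 ≤ b := by
  have h := hD.le_coarse 0 0
  simp only [sub_zero, norm2, Prod.fst_zero, Prod.snd_zero] at h
  norm_num at h
  linarith [hD.nonneg 0 0]

lemma le_ray (hD : CoarsePT b D) (hu : norm2 u = 1) (hs : 0 ≤ s) :
    D z (z + s • u) ≤ 3 * b * s + 2 * b := by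
  simpa only [norm2_sub_add_smul hu hs] using hD.le_coarse z (z + s • u)

lemma grad_le (hD : CoarsePT b D) (hu : norm2 u = 1) (hs : 2 ≤ s) : grad D z u s ≤ 4 * b := by
  rw [grad, div_le_iff₀ (by linarith)]
  nlinarith [hD.le_ray (z := z) hu (by linarith : (0 : ℝ) ≤ s), hD.b_nonneg]

lemma near_rays_le (hD : CoarsePT b D) {v : ℝ × ℝ} {t : ℝ} (hu : norm2 u = 1)
    (huv : norm2 (u - v) ≤ η) (ht : 0 ≤ t) (hst : |s - t| ≤ ℓ) :
    D (z + s • u) (z + t • v) ≤ 3 * b * (ℓ + η * t) + 2 * b ∧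
      D (z + t • v) (z + s • u) ≤ 3 * b * (ℓ + η * t) + 2 * b := by
  have hn := norm2_add_smul_sub_add_smul_le_of_near (z := z) hu huv ht hst
  have hb := hD.b_nonneg
  refine ⟨(hD.le_coarse _ _).trans ?_, (hD.le_coarse _ _).trans ?_⟩
  · gcongr
  · rw [norm2_sub_comm]
    gcongr

lemma dist_le_of_stablePt_near (hD : CoarsePT b D) {k : ℕ} (hst : StablePt D δ u ℓ k z)
    (hδ : 0 ≤ δ) (hu : norm2 u = 1) (huθ : norm2 (u - θ) ≤ η) (hℓ : 0 < ℓ) (hs : 0 < s)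
    (hsk : s ≤ k * ℓ) :
    D z (z + s • θ) ≤ (1 + δ) * (s + ℓ) * grad D z u ℓ + (3 * b * (ℓ + η * s) + 2 * b) := by
  set m := ⌈s / ℓ⌉₊
  have hm1 : 1 ≤ m := Nat.one_le_iff_ne_zero.mpr (Nat.ceil_pos.mpr (div_pos hs hℓ)).ne'
  have hmk : (m : ℝ) ≤ k := by exact_mod_cast Nat.ceil_le.mpr ((div_le_iff₀ hℓ).mpr hsk)
  have hsm : s ≤ m * ℓ := (div_le_iff₀ hℓ).mp (Nat.le_ceil _)
  have hms : m * ℓ ≤ s + ℓ := by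
    rw [← le_div_iff₀ hℓ, add_div, div_self hℓ.ne']
    exact (Nat.ceil_lt_add_one (div_nonneg hs.le hℓ.le)).le
  have hmg : m * D z (z + ℓ • u) ≤ (s + ℓ) * grad D z u ℓ := by
    rw [grad, ← mul_comm_div]
    exact mul_le_mul_of_nonneg_right ((le_div_iff₀ hℓ).mpr hms) (hD.nonneg _ _)
  have hgap := (hD.near_rays_le (z := z) (s := m * ℓ) (ℓ := ℓ) hu huθ hs.le
    (by rw [abs_le]; constructor <;> linarith)).1
  calc D z (z + s • θ) ≤ D z (z + (m * ℓ) • u) + D (z + (m * ℓ) • u) (z + s • θ) :=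
        hD.triangle _ _ _
    _ ≤ (1 + δ) * m * D z (z + ℓ • u) + (3 * b * (ℓ + η * s) + 2 * b) :=
        add_le_add (hst m hm1 hmk).2 hgap
    _ ≤ (1 + δ) * (s + ℓ) * grad D z u ℓ + (3 * b * (ℓ + η * s) + 2 * b) := by
        nlinarith [mul_le_mul_of_nonneg_left hmg (by linarith : 0 ≤ 1 + δ)]

lemma le_dist_of_stablePt_near (hD : CoarsePT b D) {k : ℝ} (hst : StablePt D δ u ℓ k z)
    (hδ : 0 ≤ δ) (hu : norm2 u = 1) (huθ : norm2 (u - θ) ≤ η) (hℓ : 0 < ℓ) (hℓs : ℓ ≤ s)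
    (hsk : s ≤ k * ℓ) :
    (s - ℓ) * grad D z u ℓ ≤ (1 + δ) * (D z (z + s • θ) + (3 * b * (ℓ + η * s) + 2 * b)) := by
  set m := ⌊s / ℓ⌋₊
  have hsℓ : 0 ≤ s / ℓ := div_nonneg (hℓ.le.trans hℓs) hℓ.le
  have hm1 : 1 ≤ m := Nat.le_floor (by rwa [Nat.cast_one, le_div_iff₀ hℓ, one_mul])
  have hmk : (m : ℝ) ≤ k := (Nat.floor_le hsℓ).trans ((div_le_iff₀ hℓ).mpr hsk)
  have hms : m * ℓ ≤ s := (le_div_iff₀ hℓ).mp (Nat.floor_le hsℓ)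
  have hsm : s - ℓ ≤ m * ℓ := by
    have := (div_lt_iff₀ hℓ).mp (Nat.lt_floor_add_one (s / ℓ))
    linarith
  have hgap := (hD.near_rays_le (z := z) (s := m * ℓ) (ℓ := ℓ) hu huθ (hℓ.le.trans hℓs)
    (by rw [abs_le]; constructor <;> linarith)).2
  have hstab : m * D z (z + ℓ • u) ≤ (1 + δ) * D z (z + (m * ℓ) • u) := by
    rw [← div_le_iff₀' (by linarith)]
    exact (hst m hm1 hmk).1
  calc (s - ℓ) * grad D z u ℓ ≤ m * ℓ * grad D z u ℓ :=
        mul_le_mul_of_nonneg_right hsm (div_nonneg (hD.nonneg _ _) hℓ.le)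
    _ = m * D z (z + ℓ • u) := by rw [grad]; field_simp
    _ ≤ (1 + δ) * D z (z + (m * ℓ) • u) := hstab
    _ ≤ (1 + δ) * (D z (z + s • θ) + (3 * b * (ℓ + η * s) + 2 * b)) := by
        gcongr
        exact (hD.triangle _ _ _).trans (add_le_add_right hgap _)

lemma grad_le_of_stablePt_near (hD : CoarsePT b D) {k : ℕ} {ε : ℝ} (hst : StablePt D δ u ℓ k z)
    (hδ : 0 ≤ δ) (hu : norm2 u = 1) (huθ : norm2 (u - θ) ≤ η) (hℓ : 2 ≤ ℓ) (hs : 0 < s)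
    (hsk : s ≤ k * ℓ) (hℓs : ℓ ≤ 4 * ε * s) (hηε : η ≤ ε) :
    grad D z θ s ≤ (1 + δ) * (grad D z u ℓ + 35 * b * ε) := by
  have hb := hD.b_nonneg
  have hε : 0 ≤ ε := by nlinarith
  have hG := hD.grad_le (z := z) hu hℓ
  have hGℓ : grad D z u ℓ * ℓ ≤ 16 * b * ε * s := by
    nlinarith [mul_le_mul hG hℓs (by linarith) (by linarith)]
  have hgeo := hD.dist_le_of_stablePt_near hst hδ hu huθ (by linarith) hs hsk
  have hE := coarse_error_le hb hℓ hs hℓs hηε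
  rw [grad, div_le_iff₀ hs]
  nlinarith [mul_le_mul_of_nonneg_left hGℓ (by linarith : 0 ≤ 1 + δ),
    mul_nonneg hδ (by positivity : 0 ≤ 19 * b * ε * s)]

lemma le_grad_of_stablePt_near (hD : CoarsePT b D) {k ε : ℝ} (hst : StablePt D δ u ℓ k z)
    (hδ : 0 ≤ δ) (hu : norm2 u = 1) (huθ : norm2 (u - θ) ≤ η) (hℓ : 2 ≤ ℓ) (hℓs' : ℓ ≤ s)
    (hsk : s ≤ k * ℓ) (hℓs : ℓ ≤ 4 * ε * s) (hηε : η ≤ ε) :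
    grad D z u ℓ - 35 * b * ε ≤ (1 + δ) * (grad D z θ s + 35 * b * ε) := by
  have hb := hD.b_nonneg
  have hs : 0 < s := by linarith
  have hε : 0 ≤ ε := by nlinarith
  have hG := hD.grad_le (z := z) hu hℓ
  have hGℓ : grad D z u ℓ * ℓ ≤ 16 * b * ε * s := by
    nlinarith [mul_le_mul hG hℓs (by linarith) (by linarith)]
  have hgeo := hD.le_dist_of_stablePt_near hst hδ hu huθ (by linarith) hℓs' hsk
  have hE := coarse_error_le hb hℓ hs hℓs hηε
  have hgrad : grad D z θ s * s = D z (z + s • θ) := div_mul_cancel₀ _ hs.ne'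
  nlinarith [mul_le_mul_of_nonneg_left hE (by linarith : 0 ≤ 1 + δ),
    mul_nonneg hδ (by positivity : 0 ≤ 19 * b * ε * s)]

end CoarsePT

lemma le_one_add_mul_of_two_sided {α b δ ε G x y : ℝ} (hα : 0 < α) (hαb : α ≤ b) (hαx : α ≤ x)
    (hδ : 0 ≤ δ) (hδε : δ ≤ ε) (hε : ε ≤ 1 / 4) (hy : y ≤ (1 + δ) * (G + 35 * b * ε))
    (hG : G - 35 * b * ε ≤ (1 + δ) * (x + 35 * b * ε)) :
    y ≤ (1 + 200 * b / α * ε) * x := by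
  set t := b / α
  have hbt : b = t * α := (div_mul_cancel₀ b hα.ne').symm
  have ht : 1 ≤ t := (one_le_div hα).mpr hαb
  have hx : 0 < x := hα.trans_le hαx
  have hbx : b * ε ≤ t * ε * x := by
    rw [hbt, mul_right_comm]
    exact mul_le_mul_of_nonneg_left hαx (by nlinarith)
  have hy' : y ≤ (1 + δ) ^ 2 * x + (1 + δ) * (3 + δ) * (35 * b * ε) := by
    nlinarith [mul_le_mul_of_nonneg_left hG (by linarith : 0 ≤ 1 + δ)]
  have hsq : (1 + δ) ^ 2 * x ≤ (1 + 3 * ε) * x := by gcongr; nlinarith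
  have hlin : (1 + δ) * (3 + δ) * (35 * b * ε) ≤ 175 * (t * ε * x) := by
    have h5 : (1 + δ) * (3 + δ) ≤ 5 := by nlinarith
    have hbε : 0 ≤ 35 * b * ε := mul_nonneg (by linarith) (by linarith)
    nlinarith [mul_le_mul_of_nonneg_right h5 hbε]
  have h3 : 3 * ε * x ≤ 25 * (t * ε * x) := by nlinarith [mul_nonneg (by linarith : 0 ≤ ε) hx.le]
  calc y ≤ x + 3 * ε * x + 175 * (t * ε * x) := by linarith
    _ ≤ (1 + 200 * t * ε) * x := by linarith
    _ = (1 + 200 * b / α * ε) * x := by rw [mul_div_assoc]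

lemma four_mul_sqrt_le_div_pow {x : ℝ} {j : ℕ} (hx : 16 * 4 ^ j ≤ x) : 4 * √x ≤ x / 2 ^ j := by
  have hsqrt : 4 * 2 ^ j ≤ √x := Real.le_sqrt_of_sq_le (by
    rw [mul_pow, ← pow_mul, mul_comm j, pow_mul]; norm_num; exact hx)
  rw [le_div_iff₀ (by positivity)]
  calc 4 * √x * 2 ^ j = √x * (4 * 2 ^ j) := by ring
    _ ≤ √x * √x := by gcongr
    _ = x := Real.mul_self_sqrt ((by positivity : (0 : ℝ) ≤ 16 * 4 ^ j).trans hx)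

lemma le_four_mul_of_div_four_mul_le {k ℓ s ε : ℝ} (hk : 0 < k) (hℓ : 0 ≤ ℓ) (hkε : 1 / k ≤ ε)
    (hs : k / 4 * ℓ ≤ s) : ℓ ≤ 4 * ε * s := by
  calc ℓ = 1 / k * (k * ℓ) := by field_simp
    _ ≤ ε * (4 * s) :=
      mul_le_mul hkε (by linarith) (by positivity) ((by positivity : 0 ≤ 1 / k).trans hkε)
    _ = 4 * ε * s := by ring

/-- There is a constant `C₀ = C₀(α, b)` such that for all large `n`:
for `n/2^j ≤ ℓ` with `kℓ ≤ n`, every `(δ, S¹(η), ℓ, k)`-stable point `z ∈ Box(n)`,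
every unit direction `θ`, and all `(k/4)ℓ ≤ ℓ', ℓ'' ≤ kℓ`,
`grad(z,θ,ℓ') ≤ (1 + C₀(η + δ + 1/k))·grad(z,θ,ℓ'')`. -/
theorem grad_nearly_constant_across_scales
    (α b : ℝ) (hα : 0 < α) (hab : α < b) :
    ∃ C₀ : ℝ, 0 < C₀ ∧
    ∀ (j : ℕ) (δ η : ℝ) (k : ℕ), 0 < δ → 0 < η → 1 ≤ k →
    ∃ N : ℕ, ∀ n : ℕ, N ≤ n →
    ∀ D : ℝ × ℝ → ℝ × ℝ → ℝ, GoodPT α b (10 * n) (Real.sqrt n) D →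
    ∀ ℓ : ℝ, (n : ℝ) / 2 ^ j ≤ ℓ → (k : ℝ) * ℓ ≤ n →
    ∀ z ∈ Box n, StableDirs D δ η ℓ (k : ℝ) z →
    ∀ θ : ℝ × ℝ, norm2 θ = 1 →
    ∀ ℓ' ℓ'' : ℝ, (k : ℝ) / 4 * ℓ ≤ ℓ' → ℓ' ≤ (k : ℝ) * ℓ →
      (k : ℝ) / 4 * ℓ ≤ ℓ'' → ℓ'' ≤ (k : ℝ) * ℓ →
      grad D z θ ℓ' ≤ (1 + C₀ * (η + δ + 1 / (k : ℝ))) * grad D z θ ℓ'' := by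
  have hb : 0 < b := hα.trans hab
  refine ⟨200 * b / α, by positivity, fun j δ η k hδ hη hk => ⟨16 * 4 ^ j, ?_⟩⟩
  intro n hn D hD ℓ hℓn hkℓ z hz hstab θ hθ ℓ' ℓ'' hℓ'lo hℓ'hi hℓ''lo hℓ''hi
  have hn' : 16 * 4 ^ j ≤ (n : ℝ) := by exact_mod_cast hn
  have hsqrt : 4 ≤ √(n : ℝ) :=
    Real.le_sqrt_of_sq_le (by nlinarith [one_le_pow₀ (by norm_num : (1 : ℝ) ≤ 4) (n := j)])
  have hℓ : 4 * √(n : ℝ) ≤ ℓ := (four_mul_sqrt_le_div_pow hn').trans hℓn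
  have hk1 : (1 : ℝ) ≤ k := by exact_mod_cast hk
  have hℓ' : ℓ / 4 ≤ ℓ' := by nlinarith
  have hℓ'' : ℓ / 4 ≤ ℓ'' := by nlinarith
  have hx : α ≤ grad D z θ ℓ'' :=
    hD.le_grad hz hθ (by linarith) (by linarith) (by nlinarith)
  set ε := η + δ + 1 / (k : ℝ) with hεdef
  have hk0 : 0 < 1 / (k : ℝ) := by positivity
  obtain ⟨hηε, hδε, hkε⟩ : η ≤ ε ∧ δ ≤ ε ∧ 1 / (k : ℝ) ≤ ε :=
    ⟨by linarith, by linarith, by linarith⟩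
  rcases le_or_gt ε (1 / 4) with hε | hε
  · obtain ⟨i, hi, hnear⟩ := exists_nat_mul_dir_near hθ hη (by linarith [pi_gt_three])
    have hq' := le_four_mul_of_div_four_mul_le (by positivity) (by linarith) hkε hℓ'lo
    have hq'' := le_four_mul_of_div_four_mul_le (by positivity) (by linarith) hkε hℓ''lo
    exact le_one_add_mul_of_two_sided hα hab.le hx hδ.le hδε hε
      (hD.coarsePT.grad_le_of_stablePt_near (hstab i hi) hδ.le (norm2_dir _) hnear (by linarith)
        (by linarith) hℓ'hi hq' hηε)
      (hD.coarsePT.le_grad_of_stablePt_near (hstab i hi) hδ.le (norm2_dir _) hnear (by linarith)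
        (by nlinarith) hℓ''hi hq'' hηε)
  · calc grad D z θ ℓ' ≤ 4 * b := hD.coarsePT.grad_le hθ (by linarith)
      _ ≤ (1 + 200 * b / α * ε) * α := by
        have h : 200 * b / α * ε * α = 200 * b * ε := by field_simp
        nlinarith
      _ ≤ (1 + 200 * b / α * ε) * grad D z θ ℓ'' := by gcongr
end
end

section
/- Let PT : R² × R² → [0,∞) satisfy the triangle inequality. Let δ > 0, θ a unit vector, ℓ > 0, k ∈ N, and let z₀, z₁, …, z_k be given by z_i := z₀ + iℓθ, with PT(z_i, z_{i+1}) > 0 for all 0 ≤ i ≤ k−1. Suppose that max_{0 ≤ i,j ≤ k−1} PT(z_i,z_{i+1})/PT(z_j,z_{j+1}) ≤ 1+δ and that k·PT(z₀,z₁)/(1+δ) ≤ PT(z₀,z_k) ≤ (1+δ)·k·PT(z₀,z₁). Then there is a universal constant C such that for every 0 ≤ i ≤ k−1 and every integer 1 ≤ k' ≤ k−i, one has (1 − Cδk)·k'·PT(z_i,z_{i+1}) ≤ PT(z_i, z_{i+k'}) ≤ (1+δ)·k'·PT(z_i,z_{i+1}); in particular, when Cδk < 1, the point z_i is (C'δk,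 θ, ℓ, k−i)-Stable for a suitable universal constant C'. -/
noncomputable section

private lemma prefix_bound (D : ℝ × ℝ → ℝ × ℝ → ℝ)
    (hT : ∀ x y z, D x z ≤ D x y + D y z) (z : ℕ → ℝ × ℝ) (B : ℝ) :
    ∀ (a m b : ℕ), (∀ j, m ≤ j → j < m + a → D (z j) (z (j+1)) ≤ B) →
      D (z m) (z (m + a + b)) ≤ a * B + D (z (m + a)) (z (m + a + b)) := by
  intro a
  induction a with
  | zero => intro m b _; simp
  | succ n ih =>
    intro m b h
    have h1 : D (z m) (z (m + (n+1) + b)) ≤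
        D (z m) (z (m+1)) + D (z (m+1)) (z (m + (n+1) + b)) := hT _ _ _
    have h2 := ih (m+1) b (fun j hj hj' => h j (by omega) (by omega))
    have h3 : m + 1 + n = m + (n+1) := by omega
    rw [h3] at h2
    have h5 : D (z m) (z (m+1)) ≤ B := h m le_rfl (by omega)
    push_cast
    linarith

private lemma suffix_bound (D : ℝ × ℝ → ℝ × ℝ → ℝ)
    (hT : ∀ x y z, D x z ≤ D x y + D y z) (z : ℕ → ℝ × ℝ) (B : ℝ) :
    ∀ (c m b : ℕ), (∀ j, m + b ≤ j → j < m + b + c → D (z j) (z (j+1)) ≤ B) →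
      D (z m) (z (m + b + c)) ≤ D (z m) (z (m + b)) + c * B := by
  intro c
  induction c with
  | zero => intro m b _; simp
  | succ n ih =>
    intro m b h
    have h1 : D (z m) (z (m + b + (n+1))) ≤
        D (z m) (z (m+b+n)) + D (z (m+b+n)) (z (m+b+n+1)) := by
      have := hT (z m) (z (m+b+n)) (z (m+b+n+1))
      have he : m + b + (n+1) = m + b + n + 1 := by omega
      rw [he]; exact this
    have h2 := ih m b (fun j hj hj' => h j (by omega) (by omega))
    have h5 : D (z (m+b+n)) (z (m+b+n+1)) ≤ B := h _ (by omega) (by omega)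
    push_cast
    linarith

set_option maxHeartbeats 1000000 in
/-- Suppose `D` satisfies the triangle inequality, the points
`z_i = z₀ + iℓθ` satisfy `D(z_i, z_{i+1}) > 0`, the consecutive passage times are
within a factor `1+δ` of each other, and `k·D(z₀,z₁)/(1+δ) ≤ D(z₀,z_k) ≤
(1+δ)·k·D(z₀,z₁)`. Then, for universal constants `C, C'`: for all `0 ≤ i ≤ k−1` and
`1 ≤ k' ≤ k−i`, `(1−Cδk)·k'·D(z_i,z_{i+1}) ≤ D(z_i,z_{i+k'}) ≤
(1+δ)·k'·D(z_i,z_{i+1})`; in particular, when `Cδk < 1`, `z_i` is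
`(C'δk, θ, ℓ, k−i)`-stable. -/
theorem crude_stability_lemma :
    ∃ C C' : ℝ, 0 < C ∧ 0 < C' ∧
    ∀ D : ℝ × ℝ → ℝ × ℝ → ℝ,
      (∀ x y, 0 ≤ D x y) → (∀ x y z, D x z ≤ D x y + D y z) →
    ∀ δ : ℝ, 0 < δ → ∀ θ : ℝ × ℝ, norm2 θ = 1 → ∀ ℓ : ℝ, 0 < ℓ →
    ∀ k : ℕ, 1 ≤ k → ∀ z₀ : ℝ × ℝ, ∀ z : ℕ → ℝ × ℝ,
      (∀ i : ℕ, z i = z₀ + ((i : ℝ) * ℓ) • θ) →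
      (∀ i ≤ k - 1, 0 < D (z i) (z (i + 1))) →
      (∀ i ≤ k - 1, ∀ j ≤ k - 1,
        D (z i) (z (i + 1)) ≤ (1 + δ) * D (z j) (z (j + 1))) →
      (k : ℝ) * D (z 0) (z 1) / (1 + δ) ≤ D (z 0) (z k) →
      D (z 0) (z k) ≤ (1 + δ) * (k : ℝ) * D (z 0) (z 1) →
      (∀ i ≤ k - 1, ∀ k' : ℕ, 1 ≤ k' → k' ≤ k - i →
        (1 - C * δ * (k : ℝ)) * (k' : ℝ) * D (z i) (z (i + 1)) ≤
            D (z i) (z (i + k')) ∧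
          D (z i) (z (i + k')) ≤ (1 + δ) * (k' : ℝ) * D (z i) (z (i + 1))) ∧
      (C * δ * (k : ℝ) < 1 → ∀ i ≤ k - 1,
        StablePt D (C' * δ * (k : ℝ)) θ ℓ (((k - i : ℕ) : ℝ)) (z i)) := by
  refine ⟨12, 12, by norm_num, by norm_num, ?_⟩
  intro D hnn hT δ hδ θ _ ℓ hℓ k hk z₀ z hz hpos hratio hlo hhi
  have hδ1 : (0:ℝ) < 1 + δ := by linarith
  set K : ℝ := (k : ℝ) with hK
  have hK1 : (1:ℝ) ≤ K := by rw [hK]; exact_mod_cast hk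
  -- key: main estimate with constant 3
  have main : ∀ i ≤ k - 1, ∀ k' : ℕ, 1 ≤ k' → k' ≤ k - i →
      (1 - 3 * δ * K) * (k' : ℝ) * D (z i) (z (i + 1)) ≤ D (z i) (z (i + k')) ∧
      D (z i) (z (i + k')) ≤ (1 + δ) * (k' : ℝ) * D (z i) (z (i + 1)) := by
    intro i hi k' hk'1 hk'
    have hik : i + k' ≤ k := by omega
    set b : ℝ := D (z i) (z (i + 1)) with hb
    have hbpos : 0 < b := hpos i hi
    set B : ℝ := (1 + δ) * b with hB
    have hstep : ∀ j ≤ k - 1, D (z j) (z (j + 1)) ≤ B := fun j hj => hratio j hj i hi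
    -- upper bound
    have hup : D (z i) (z (i + k')) ≤ (k' : ℝ) * B := by
      have h1 := prefix_bound D hT z B (k' - 1) i 1
        (fun j hj hj' => hstep j (by omega))
      have he : i + (k' - 1) + 1 = i + k' := by omega
      rw [he] at h1
      have h2 : D (z (i + (k' - 1))) (z (i + (k'-1) + 1)) ≤ B :=
        hstep _ (by omega)
      rw [he] at h2
      have hc : ((k' - 1 : ℕ) : ℝ) = (k' : ℝ) - 1 := by
        push_cast [Nat.cast_sub hk'1]; ring
      calc D (z i) (z (i + k')) ≤ ((k'-1:ℕ):ℝ) * B + D (z (i + (k'-1))) (z (i+k')) := h1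
        _ ≤ ((k':ℝ) - 1) * B + B := by rw [hc]; linarith
        _ = (k':ℝ) * B := by ring
    refine ⟨?_, by rw [hB] at hup; linarith [hup]⟩
    -- lower bound
    set r : ℕ := k - (i + k') with hr
    have hkeq : k = i + k' + r := by omega
    have hpre := prefix_bound D hT z B i 0 (k' + r)
      (fun j hj hj' => hstep j (by omega))
    have hsuf := suffix_bound D hT z B r i k'
      (fun j hj hj' => hstep j (by omega))
    have he1 : 0 + i + (k' + r) = k := by omega
    have he1' : 0 + i = i := by omega
    have he2 : i + k' + r = k := by omega
    rw [he1, he1'] at hpre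
    rw [he2] at hsuf
    have hsplit : D (z 0) (z k) ≤ (i : ℝ) * B + D (z i) (z (i + k')) + (r : ℝ) * B := by
      linarith
    have hba : b ≤ (1 + δ) * D (z 0) (z 1) := hratio i hi 0 (by omega)
    have hDlo : K * b / (1 + δ) ^ 2 ≤ D (z 0) (z k) := by
      have h1 : K * b / (1 + δ) ^ 2 ≤ K * D (z 0) (z 1) / (1 + δ) := by
        rw [div_le_div_iff₀ (by positivity) hδ1]
        have hK0 : (0:ℝ) ≤ K := by linarith
        nlinarith [mul_le_mul_of_nonneg_left hba hK0]
      linarith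
    have hir : (i : ℝ) + (r : ℝ) = K - (k' : ℝ) := by
      have : i + r + k' = k := by omega
      have := congrArg (Nat.cast : ℕ → ℝ) this
      push_cast at this
      linarith
    have hDi : K * b / (1 + δ) ^ 2 - (K - (k' : ℝ)) * B ≤ D (z i) (z (i + k')) := by
      have : ((i:ℝ) + r) * B = (K - (k':ℝ)) * B := by rw [hir]
      nlinarith [hsplit, hDlo]
    have hK' : (1:ℝ) ≤ (k' : ℝ) := by exact_mod_cast hk'1
    have hK'K : (k' : ℝ) ≤ K := by rw [hK]; exact_mod_cast (by omega : k' ≤ k)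
    have hKK' : K ≤ K * (k' : ℝ) := by nlinarith
    have e1 : δ * K ≤ δ * (K * (k':ℝ)) := mul_le_mul_of_nonneg_left hKK' hδ.le
    have e2 : δ * (K - (k':ℝ)) ≤ δ * K :=
      mul_le_mul_of_nonneg_left (by linarith) hδ.le
    have e3 : δ^2 * K ≤ δ^2 * (K * (k':ℝ)) :=
      mul_le_mul_of_nonneg_left hKK' (by positivity)
    have e4 : δ^2 * (K - (k':ℝ)) ≤ δ^2 * K :=
      mul_le_mul_of_nonneg_left (by linarith) (by positivity)
    have e5 : δ^3 * K ≤ δ^3 * (K * (k':ℝ)) :=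
      mul_le_mul_of_nonneg_left hKK' (by positivity)
    have e6 : δ^3 * (K - (k':ℝ)) ≤ δ^3 * K :=
      mul_le_mul_of_nonneg_left (by linarith) (by positivity)
    have e7 : (0:ℝ) ≤ δ^2 * (K * (k':ℝ)) := by positivity
    have e8 : (0:ℝ) ≤ δ^3 * (K * (k':ℝ)) := by positivity
    have hcoef : ((1 - 3*δ*K) * (k':ℝ) + (K - (k':ℝ)) * (1+δ)) * (1+δ)^2 ≤ K := by
      linarith [e1, e2, e3, e4, e5, e6, e7, e8]
    have halg : (1 - 3 * δ * K) * (k' : ℝ) * b + (K - (k':ℝ)) * B ≤ K * b / (1 + δ) ^ 2 := by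
      rw [le_div_iff₀ (by positivity)]
      have := mul_le_mul_of_nonneg_right hcoef hbpos.le
      rw [hB]; linarith [this]
    linarith
  have hδK : (0:ℝ) < δ * K := by positivity
  constructor
  · intro i hi k' hk'1 hk'
    obtain ⟨hl, hu⟩ := main i hi k' hk'1 hk'
    refine ⟨?_, hu⟩
    have hb0 : (0:ℝ) ≤ D (z i) (z (i + 1)) := hnn _ _
    have hk'0 : (0:ℝ) ≤ (k':ℝ) := by positivity
    have : (1 - 12 * δ * K) * (k':ℝ) * D (z i) (z (i + 1)) ≤
        (1 - 3 * δ * K) * (k':ℝ) * D (z i) (z (i + 1)) := by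
      nlinarith [mul_nonneg (mul_nonneg hδ.le (by linarith : (0:ℝ) ≤ K))
        (mul_nonneg hk'0 hb0)]
    linarith
  · intro h12 i hi
    intro k' hk'1 hk'le
    have hk'n : k' ≤ k - i := by exact_mod_cast hk'le
    obtain ⟨hl, hu⟩ := main i hi k' hk'1 hk'n
    have hzz1 : z i + ℓ • θ = z (i + 1) := by
      rw [hz i, hz (i + 1)]
      push_cast
      rw [add_mul, one_mul, add_smul, add_assoc]
    have hzzk : z i + ((k' : ℝ) * ℓ) • θ = z (i + k') := by
      rw [hz i, hz (i + k')]
      push_cast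
      rw [add_mul, add_smul, add_assoc]
    rw [hzz1, hzzk]
    have hbpos : 0 < D (z i) (z (i + 1)) := hpos i hi
    have hk'0 : (0:ℝ) ≤ (k':ℝ) := by positivity
    have hx1 : 12 * δ * K < 1 := h12
    have hpos12 : (0:ℝ) < 1 + 12 * δ * K := by positivity
    constructor
    · rw [div_le_iff₀ hpos12]
      have step := mul_le_mul_of_nonneg_right hl hpos12.le
      have key : (k':ℝ) * D (z i) (z (i + 1)) ≤
          (1 - 3 * δ * K) * (k':ℝ) * D (z i) (z (i + 1)) * (1 + 12 * δ * K) := by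
        nlinarith [mul_nonneg (mul_nonneg (mul_nonneg hδ.le (by linarith : (0:ℝ) ≤ K))
          (by linarith : (0:ℝ) ≤ 3 - 36 * δ * K)) (mul_nonneg hk'0 hbpos.le)]
      linarith
    · have : (1 + δ) * (k':ℝ) * D (z i) (z (i + 1)) ≤
          (1 + 12 * δ * K) * (k':ℝ) * D (z i) (z (i + 1)) := by
        nlinarith [mul_nonneg (mul_nonneg hδ.le (by linarith : (0:ℝ) ≤ 12 * K - 1))
          (mul_nonneg hk'0 hbpos.le)]
      linarith
end
end
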